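/- Let k ≥ 4 and let G_k be the graph obtained from the complete graph K_k by attaching one pendant leaf to each vertex. Then for any edge e inside the k-clique, γ_g'(G_k) = k = γ_g'(G_k − e). -/

import Mathlib

open Classical

noncomputable section

namespace DomGame

variable {V : Type*} [Fintype V]

/-- Closed neighborhood of `v` as a `Finset`. -/
noncomputable def N (G : SimpleGraph V) (v : V) : Finset V :=
  Finset.univ.filter (fun u => G.Adj v u ∨ u = v)

/-- Legal moves given the set `S` of already dominated vertices. -/
noncomputable def moves (G : SimpleGraph V) (S : Finset V) : Finset V :=
  Finset.univ.filter (fun v => ¬ N G v ⊆ S)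

lemma card_lt {G : SimpleGraph V} {S : Finset V} (v : V) (hv : v ∈ moves G S) :
    (Finset.univ \ (S ∪ N G v)).card < (Finset.univ \ S).card := by
  simp only [moves, Finset.mem_filter] at hv
  obtain ⟨u, hu, hus⟩ := Finset.not_subset.mp hv.2
  apply Finset.card_lt_card
  refine ⟨Finset.sdiff_subset_sdiff (le_refl _) Finset.subset_union_left, ?_⟩
  intro hsub
  have := hsub (Finset.mem_sdiff.mpr ⟨Finset.mem_univ u, hus⟩)
  rw [Finset.mem_sdiff, Finset.mem_union] at this
  exact this.2 (Or.inr hu)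

mutual
/-- Number of moves with optimal play when it is Dominator's turn and
`S` is the set of already dominated vertices. -/
noncomputable def gameD (G : SimpleGraph V) (S : Finset V) : ℕ :=
  if h : (moves G S).Nonempty then
    1 + (moves G S).attach.inf' (by simpa using h)
      (fun v => gameS G (S ∪ N G v.1))
  else 0
termination_by (Finset.univ \ S).card
decreasing_by exact card_lt v.1 v.2

/-- Number of moves with optimal play when it is Staller's turn. -/
noncomputable def gameS (G : SimpleGraph V) (S : Finset V) : ℕ :=
  if h : (moves G S).Nonempty then
    1 + (moves G S).attach.sup' (by simpa using h)
      (fun v => gameD G (S ∪ N G v.1))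
  else 0
termination_by (Finset.univ \ S).card
decreasing_by exact card_lt v.1 v.2
end

/-- The (Dominator-start) game domination number. -/
noncomputable def gammaG (G : SimpleGraph V) : ℕ := gameD G ∅

/-- The Staller-start game domination number. -/
noncomputable def gammaG' (G : SimpleGraph V) : ℕ := gameS G ∅

end DomGame

open DomGame

/-- The graph obtained from `K_k` (on the `inl` vertices) by attaching a
pendant leaf `inr i` to each clique vertex `inl i`. -/
noncomputable def cliqueWithLeaves (k : ℕ) : SimpleGraph (Fin k ⊕ Fin k) :=
  SimpleGraph.fromRel (fun a b =>
    match a, b with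
    | Sum.inl _, Sum.inl _ => True
    | Sum.inl i, Sum.inr j => i = j
    | _, _ => False)

/-!
Every closed neighbourhood contains at most one leaf, so each move dominates at most one new
leaf and the game lasts at least `k` moves. Conversely, after Staller's first move, which
dominates some leaf `a`, Dominator plays a clique vertex `b ≠ a` that is not an end of the
deleted edge; it dominates the whole clique and leaf `b`, leaving at most `k - 2` undominated
leaves, each costing one more move.
-/

namespace DomGame

variable {V : Type*} [Fintype V] {G H : SimpleGraph V} {S : Finset V} {u v : V} {a : ℕ}

lemma mem_N : u ∈ N G v ↔ G.Adj v u ∨ u = v := by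
  simp [N]

lemma self_mem_N (v : V) : v ∈ N G v :=
  mem_N.mpr (Or.inr rfl)

lemma N_mono (h : G ≤ H) (v : V) : N G v ⊆ N H v := fun _ hu =>
  mem_N.mpr ((mem_N.mp hu).imp_left (@h _ _))

lemma mem_moves : v ∈ moves G S ↔ ¬ N G v ⊆ S := by
  simp [moves]

lemma eq_univ_of_not_nonempty_moves (h : ¬ (moves G S).Nonempty) : S = Finset.univ :=
  Finset.eq_univ_of_forall fun v => by_contra fun hv =>
    h ⟨v, mem_moves.mpr fun hN => hv (hN (self_mem_N v))⟩

theorem game_induction {P : Finset V → Prop}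
    (step : ∀ S, (∀ v ∈ moves G S, P (S ∪ N G v)) → P S) (S : Finset V) : P S :=
  step S fun v _ => game_induction step (S ∪ N G v)
termination_by (Finset.univ \ S).card
decreasing_by exact card_lt v ‹_›

lemma gameD_le (hv : v ∈ moves G S) : gameD G S ≤ 1 + gameS G (S ∪ N G v) := by
  rw [gameD, dif_pos ⟨v, hv⟩]
  exact Nat.add_le_add_left (Finset.inf'_le _ (Finset.mem_attach _ ⟨v, hv⟩)) 1

lemma le_gameD (h : (moves G S).Nonempty) (hall : ∀ v ∈ moves G S, a ≤ gameS G (S ∪ N G v)) :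
    1 + a ≤ gameD G S := by
  rw [gameD, dif_pos h]
  exact Nat.add_le_add_left (Finset.le_inf' _ _ fun v _ => hall v.1 v.2) 1

lemma gameS_le (hall : ∀ v ∈ moves G S, gameD G (S ∪ N G v) ≤ a) : gameS G S ≤ 1 + a := by
  rw [gameS]
  split_ifs
  · exact Nat.add_le_add_left (Finset.sup'_le _ _ fun v _ => hall v.1 v.2) 1
  · omega

lemma le_gameS (h : (moves G S).Nonempty) (hall : ∀ v ∈ moves G S, a ≤ gameD G (S ∪ N G v)) :
    1 + a ≤ gameS G S := by
  obtain ⟨v, hv⟩ := h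
  rw [gameS, dif_pos ⟨v, hv⟩]
  exact Nat.add_le_add_left
    ((hall v hv).trans (Finset.le_sup' (fun w : moves G S => gameD G (S ∪ N G w.1))
      (Finset.mem_attach _ ⟨v, hv⟩))) 1

lemma card_compl_union_N_lt (hv : v ∈ moves G S) : (S ∪ N G v)ᶜ.card < Sᶜ.card := by
  simpa only [Finset.compl_eq_univ_sdiff] using card_lt v hv

lemma gameD_eq_zero (h : ¬ (moves G S).Nonempty) : gameD G S = 0 := by
  rw [gameD, dif_neg h]

lemma gameS_eq_zero (h : ¬ (moves G S).Nonempty) : gameS G S = 0 := by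
  rw [gameS, dif_neg h]

lemma game_le_card_compl (S : Finset V) : gameD G S ≤ Sᶜ.card ∧ gameS G S ≤ Sᶜ.card := by
  induction S using game_induction (G := G) with
  | step S ih =>
    have hS : gameS G S ≤ 1 + (Sᶜ.card - 1) := gameS_le fun v hv => by
      have := card_compl_union_N_lt hv
      have := (ih v hv).1
      omega
    by_cases h : (moves G S).Nonempty
    · obtain ⟨v, hv⟩ := h
      have := gameD_le hv
      have := card_compl_union_N_lt hv
      have := (ih v hv).2
      omega
    · simp [gameD_eq_zero h, gameS_eq_zero h]

lemma gameS_le_add_two_of_reply (hreply : ∀ v, ∃ w, (S ∪ N G v ∪ N G w)ᶜ.card ≤ a) :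
    gameS G S ≤ a + 2 := by
  suffices h : ∀ v, gameD G (S ∪ N G v) ≤ a + 1 from (gameS_le fun v _ => h v).trans (by omega)
  intro v
  obtain ⟨w, hw⟩ := hreply v
  by_cases hmove : w ∈ moves G (S ∪ N G v)
  · have := gameD_le hmove
    have := (game_le_card_compl (G := G) (S ∪ N G v ∪ N G w)).2
    omega
  · rw [mem_moves, not_not, ← Finset.union_eq_left] at hmove
    rw [hmove] at hw
    have := (game_le_card_compl (G := G) (S ∪ N G v)).1
    omega

lemma card_sdiff_le_game {L : Finset V} (hL : ∀ v, (↑L ∩ ↑(N G v) : Set V).Subsingleton)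
    (S : Finset V) :
    (L \ S).card ≤ gameD G S ∧ (L \ S).card ≤ gameS G S := by
  induction S using game_induction (G := G) with
  | step S ih =>
    by_cases h : (moves G S).Nonempty
    · have hstep : ∀ v, (L \ S).card ≤ (L \ (S ∪ N G v)).card + 1 := fun v =>
        calc (L \ S).card ≤ (L \ (S ∪ N G v) ∪ L ∩ N G v).card :=
              Finset.card_le_card fun u hu => by
                simp only [Finset.mem_sdiff, Finset.mem_union, Finset.mem_inter] at hu ⊢
                tauto
          _ ≤ (L \ (S ∪ N G v)).card + (L ∩ N G v).card := Finset.card_union_le _ _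
          _ ≤ (L \ (S ∪ N G v)).card + 1 := by
            gcongr
            exact Finset.card_le_one.mpr fun x hx y hy =>
              hL v (by simpa using hx) (by simpa using hy)
      have hD := le_gameD (a := (L \ S).card - 1) h fun v hv => by
        have := (ih v hv).2
        have := hstep v
        omega
      have hS := le_gameS (a := (L \ S).card - 1) h fun v hv => by
        have := (ih v hv).1
        have := hstep v
        omega
      omega
    · rw [eq_univ_of_not_nonempty_moves h,
        Finset.sdiff_eq_empty_iff_subset.mpr (Finset.subset_univ L)]
      simp

end DomGame

section CliqueWithLeaves

open DomGame Finset Sum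

variable {k : ℕ} {G : SimpleGraph (Fin k ⊕ Fin k)}

lemma subsingleton_leaves_inter_N (hG : G ≤ cliqueWithLeaves k) (v : Fin k ⊕ Fin k) :
    (Set.range inr ∩ ↑(N G v) : Set (Fin k ⊕ Fin k)).Subsingleton := by
  rintro _ ⟨⟨a, rfl⟩, hxN⟩ _ ⟨⟨b, rfl⟩, hyN⟩
  have ha := mem_N.mp (N_mono hG v hxN)
  have hb := mem_N.mp (N_mono hG v hyN)
  cases v <;> simp_all [cliqueWithLeaves]

lemma le_gammaG'_of_le_cliqueWithLeaves (hG : G ≤ cliqueWithLeaves k) : k ≤ gammaG' G := by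
  have hL := card_sdiff_le_game (L := univ.map Function.Embedding.inr) (by
    simpa using subsingleton_leaves_inter_N hG) ∅
  simpa [gammaG'] using hL.2

lemma gammaG'_le_of_pendant_of_universal (hpend : ∀ a, G.Adj (inl a) (inr a))
    {B : Finset (Fin k)} (hB : 2 ≤ B.card) (huniv : ∀ b ∈ B, ∀ c, inl c ∈ N G (inl b)) :
    gammaG' G ≤ k := by
  have hk : 2 ≤ k := hB.trans (by simpa using card_le_univ B)
  have hleaf : ∀ v, ∃ a, inr a ∈ N G v := by
    rintro (a | a)
    · exact ⟨a, mem_N.mpr (Or.inl (hpend a))⟩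
    · exact ⟨a, self_mem_N _⟩
  refine (gameS_le_add_two_of_reply (a := k - 2) fun v => ?_).trans (by omega)
  obtain ⟨a, ha⟩ := hleaf v
  obtain ⟨b, hbB, hba⟩ := exists_mem_ne hB a
  refine ⟨inl b, (card_le_card (t := univ.map Function.Embedding.inr \ {inr a, inr b}) ?_).trans ?_⟩
  · rintro (c | c) hc <;> simp only [mem_compl, mem_union, not_or] at hc
    · exact absurd (huniv b hbB c) hc.2
    · simp only [mem_sdiff, mem_map, mem_univ, true_and, Function.Embedding.inr_apply,
        mem_insert, mem_singleton, not_or, inr.injEq]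
      refine ⟨⟨c, rfl⟩, ?_, ?_⟩ <;> rintro rfl
      · exact hc.1.2 ha
      · exact hc.2 (mem_N.mpr (Or.inl (hpend c)))
  · rw [card_sdiff_of_subset (by simp [insert_subset_iff]), card_pair (by simpa using hba.symm)]
    simp

lemma cliqueWithLeaves_deleteEdges_adj_inl_inr (i j a : Fin k) :
    ((cliqueWithLeaves k).deleteEdges {s(inl i, inl j)}).Adj (inl a) (inr a) := by
  simp [cliqueWithLeaves]

lemma inl_mem_N_cliqueWithLeaves_deleteEdges {i j b : Fin k} (hbi : b ≠ i) (hbj : b ≠ j)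
    (c : Fin k) : inl c ∈ N ((cliqueWithLeaves k).deleteEdges {s(inl i, inl j)}) (inl b) := by
  rw [mem_N]
  rcases eq_or_ne b c with rfl | hbc
  · exact Or.inr rfl
  · simp [cliqueWithLeaves, hbc, hbi, hbj]

theorem gammaG'_eq_of_deleteEdges_le_of_le (hk : 4 ≤ k) (i j : Fin k)
    (hlow : (cliqueWithLeaves k).deleteEdges {s(inl i, inl j)} ≤ G)
    (hup : G ≤ cliqueWithLeaves k) : gammaG' G = k := by
  refine le_antisymm ?_ (le_gammaG'_of_le_cliqueWithLeaves hup)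
  refine gammaG'_le_of_pendant_of_universal (B := {i, j}ᶜ)
    (fun a => hlow (cliqueWithLeaves_deleteEdges_adj_inl_inr i j a)) ?_ fun b hb c => ?_
  · rw [card_compl, Fintype.card_fin]
    have := card_le_two (a := i) (b := j)
    omega
  · simp only [mem_compl, mem_insert, mem_singleton, not_or] at hb
    exact N_mono hlow _ (inl_mem_N_cliqueWithLeaves_deleteEdges hb.1 hb.2 c)

end CliqueWithLeaves

/-- For `k ≥ 4` and `G_k` the complete graph `K_k` with one pendant leaf
attached to each vertex, `γ_g'(G_k) = k = γ_g'(G_k − e)` for any edge `e`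
inside the `k`-clique. -/
theorem gameS_clique_with_leaves (k : ℕ) (hk : 4 ≤ k) (i j : Fin k) (hij : i ≠ j) :
    gammaG' (cliqueWithLeaves k) = k ∧
    gammaG' ((cliqueWithLeaves k).deleteEdges {s(Sum.inl i, Sum.inl j)}) = k :=
  ⟨gammaG'_eq_of_deleteEdges_le_of_le hk i j (SimpleGraph.deleteEdges_le _) le_rfl,
    gammaG'_eq_of_deleteEdges_le_of_le hk i j le_rfl (SimpleGraph.deleteEdges_le _)⟩
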